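/- arXiv:1804.05989 — 2 statements merged into one kernel-verified Lean document; each statement's English description precedes it below -/
import Mathlib

section
/- Let P' be the result of eliminating a feasible AND-tree t for false from P, let p^I(x) label an initial node of t, and let θ = constr(t) projected onto x. Then presafe(P) is equivalent to presafe(P') ∧ ¬θ as a safe precondition: conjoining ¬θ with presafe(P') yields a safe precondition for P. -/
/- Abstract framework for constrained Horn clauses (CHCs).
   Constraints are modelled semantically: a clause constraint relates the
   value of the head argument to the list of values of the body atoms'
   arguments.  An AND-tree is a tree of clauses (`Skel`); it is feasible iff
   it admits a decoration by domain values satisfying all constraints. -/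

namespace CHC

structure Clause (Pred D : Type) where
  head : Pred
  body : List Pred
  constr : D → List D → Prop

abbrev Program (Pred D : Type) := Set (Clause Pred D)

/-- AND-trees (node labels: clauses; children correspond to body atoms). -/
inductive Skel (Pred D : Type) : Type where
  | node : Clause Pred D → List (Skel Pred D) → Skel Pred D

def Skel.root {Pred D : Type} : Skel Pred D → Pred
  | .node c _ => c.head

/-- An AND-tree for the program `P`: every node is labelled by a clause of
`P` and the children's roots are the body atoms of the clause. -/
inductive Wf {Pred D : Type} (P : Program Pred D) : Skel Pred D → Prop where
  | node {c : Clause Pred D} {ts : List (Skel Pred D)} :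
      c ∈ P → c.body = ts.map Skel.root → (∀ t ∈ ts, Wf P t) →
      Wf P (Skel.node c ts)

/-- `Deco s d` : the AND-tree `s` admits a satisfying assignment of values to
its nodes in which the root gets value `d` (so `s` is feasible). -/
inductive Deco {Pred D : Type} : Skel Pred D → D → Prop where
  | node {c : Clause Pred D} {ts : List (Skel Pred D)} {d : D} {args : List D} :
      c.constr d args → args.length = ts.length →
      (∀ p ∈ ts.zip args, Deco p.1 p.2) →
      Deco (Skel.node c ts) d

/-- `P ⊢_T p` : there is a feasible AND-tree for `P` with root labelled `p`. -/
def Derives {Pred D : Type} (P : Program Pred D) (p : Pred) : Prop :=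
  ∃ (s : Skel Pred D) (d : D), Wf P s ∧ s.root = p ∧ Deco s d

/-- Initial clauses: constrained facts for (a renamed version of) the initial
predicate; `inits` is the set of (renamed versions of) the initial predicate. -/
def IsInitial {Pred D : Type} (inits : Set Pred) (c : Clause Pred D) : Prop :=
  c.head ∈ inits ∧ c.body = []

/-- The AND-tree contains an initial node. -/
inductive HasInit {Pred D : Type} (inits : Set Pred) : Skel Pred D → Prop where
  | here {c : Clause Pred D} {ts} : IsInitial inits c → HasInit inits (Skel.node c ts)
  | there {c : Clause Pred D} {ts} {t} : t ∈ ts → HasInit inits t →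
      HasInit inits (Skel.node c ts)

/-- presafe(P) = ¬ ⋁ { θ | (p^I(x) ← θ) ∈ P }. -/
def presafe {Pred D : Type} (P : Program Pred D) (inits : Set Pred) (d : D) : Prop :=
  ¬ ∃ c ∈ P, IsInitial inits c ∧ c.constr d []

/-- The program obtained from `P` by replacing each initial clause
`p^I(x) ← θ` by `p^I(x) ← θ ∧ φ`. -/
def conjoinInit {Pred D : Type} (P : Program Pred D) (inits : Set Pred) (φ : D → Prop) :
    Program Pred D :=
  { c' | ∃ c ∈ P, (¬ IsInitial inits c ∧ c' = c) ∨
      (IsInitial inits c ∧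
        c' = { c with constr := fun d args => c.constr d args ∧ φ d }) }

/-- `φ` is a safe precondition for `P` (with distinguished `false` predicate
`ff`): conjoining `φ` to every initial clause blocks all feasible AND-trees
for `false`. -/
def SafePrecond {Pred D : Type} (P : Program Pred D) (inits : Set Pred) (ff : Pred)
    (φ : D → Prop) : Prop :=
  ¬ Derives (conjoinInit P inits φ) ff

/-- Specialisation transformation `P ⟹_A P'` (Definition 3): derivations of
the goal atom are preserved, and every initial clause of `P` has a counterpart
in `P'` with stronger constraint. -/
def IsSpec {Pred D : Type} (P P' : Program Pred D) (inits inits' : Set Pred)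
    (goal : Pred) : Prop :=
  (Derives P goal ↔ Derives P' goal) ∧
  ∀ c ∈ P, IsInitial inits c →
    ∃ c' ∈ P', IsInitial inits' c' ∧ ∀ d : D, c'.constr d [] → c.constr d []

end CHC

namespace CHC

/-- Renaming of predicates in a clause (constraints are unchanged). -/
def Clause.rename {Pred D : Type} (ρ : Pred → Pred) (c : Clause Pred D) :
    Clause Pred D :=
  ⟨ρ c.head, c.body.map ρ, c.constr⟩

/-- Renaming of predicates in an AND-tree. -/
def Skel.rename {Pred D : Type} (ρ : Pred → Pred) : Skel Pred D → Skel Pred D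
  | .node c ts => .node (c.rename ρ) (ts.attach.map (fun t => Skel.rename ρ t.1))
  decreasing_by
    have := List.sizeOf_lt_of_mem t.2
    simp only [Skel.node.sizeOf_spec]
    omega

end CHC

namespace CHC

/-- AND-trees decorated with values at each node (an assignment). -/
inductive DTree (Pred D : Type) : Type where
  | node : Clause Pred D → D → List (DTree Pred D) → DTree Pred D

def DTree.val {Pred D : Type} : DTree Pred D → D
  | .node _ d _ => d

/-- The underlying (undecorated) AND-tree of a decorated tree. -/
def DTree.skel {Pred D : Type} : DTree Pred D → Skel Pred D
  | .node c _ ts => .node c (ts.attach.map (fun t => DTree.skel t.1))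
  decreasing_by
    have := List.sizeOf_lt_of_mem t.2
    simp only [DTree.node.sizeOf_spec]
    omega

/-- The decoration satisfies all constraints of the tree. -/
inductive DFeas {Pred D : Type} : DTree Pred D → Prop where
  | node {c : Clause Pred D} {d : D} {ts : List (DTree Pred D)} :
      c.constr d (ts.map DTree.val) → (∀ t ∈ ts, DFeas t) →
      DFeas (DTree.node c d ts)

/-- The value assigned at a given position (path of child indices). -/
inductive ValAt {Pred D : Type} : DTree Pred D → List ℕ → D → Prop where
  | here {c : Clause Pred D} {d : D} {ts} : ValAt (DTree.node c d ts) [] d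
  | child {c : Clause Pred D} {d : D} {ts} {i : ℕ} {t : DTree Pred D}
      {π : List ℕ} {v : D} :
      ts[i]? = some t → ValAt t π v → ValAt (DTree.node c d ts) (i :: π) v

/-- The clause labelling the node at a given position of an AND-tree. -/
inductive ClauseAt {Pred D : Type} : Skel Pred D → List ℕ → Clause Pred D → Prop where
  | here {c : Clause Pred D} {ts} : ClauseAt (Skel.node c ts) [] c
  | child {c₀ c : Clause Pred D} {ts} {i : ℕ} {t : Skel Pred D} {π : List ℕ} :
      ts[i]? = some t → ClauseAt t π c → ClauseAt (Skel.node c₀ ts) (i :: π) c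

/-- `s` is feasible: it admits a satisfying decoration. -/
def Feasible {Pred D : Type} (s : Skel Pred D) : Prop :=
  ∃ dt : DTree Pred D, dt.skel = s ∧ DFeas dt

end CHC


/-!
Forgetting the conjoined constraint turns a feasible derivation of `false` in the strengthened
program into a feasible AND-tree `s` of `P` whose initial nodes carry values satisfying
`presafe(P') ∧ ¬θ`. If `s = t`, the value at the initial node `π` satisfies `θ`, as `θ` is the
projection of the constraints of `t`. Otherwise `s` is the renaming of an AND-tree of `P'`, so each
initial node of `s` (there is one) is a renamed initial fact of `P'` whose constraint holds at the
node's value, contradicting `presafe(P')`.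
-/

namespace List

theorem exists_forall₂_of_forall_exists {α β : Type*} {R : α → β → Prop} :
    ∀ l : List α, (∀ a ∈ l, ∃ b, R a b) → ∃ l' : List β, Forall₂ R l l'
  | [], _ => ⟨[], .nil⟩
  | a :: l, h => by
    obtain ⟨b, hb⟩ := h a mem_cons_self
    obtain ⟨l', hl'⟩ := exists_forall₂_of_forall_exists l fun x hx => h x (mem_cons_of_mem a hx)
    exact ⟨b :: l', .cons hb hl'⟩

theorem Forall₂.map_eq_map {α β γ : Type*} {f : α → γ} {g : β → γ} {l₁ : List α} {l₂ : List β}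
    (h : Forall₂ (fun a b => f a = g b) l₁ l₂) : l₁.map f = l₂.map g := by
  rw [← forall₂_eq_eq_eq, forall₂_map_left_iff, forall₂_map_right_iff]
  exact h

theorem Forall₂.exists_mem_left {α β : Type*} {R : α → β → Prop} {l₁ : List α} {l₂ : List β}
    (h : Forall₂ R l₁ l₂) {b : β} (hb : b ∈ l₂) : ∃ a ∈ l₁, R a b := by
  induction h with
  | nil => cases hb
  | cons hab _ ih =>
    rcases mem_cons.mp hb with rfl | hb
    · exact ⟨_, mem_cons_self, hab⟩
    · obtain ⟨a, ha, hr⟩ := ih hb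
      exact ⟨a, mem_cons_of_mem _ ha, hr⟩

end List

namespace CHC

variable {Pred D : Type}

@[simp]
theorem DTree.skel_node (c : Clause Pred D) (d : D) (ts : List (DTree Pred D)) :
    (DTree.node c d ts).skel = Skel.node c (ts.map DTree.skel) := by
  rw [DTree.skel]; simp

@[simp]
theorem Skel.rename_node (ρ : Pred → Pred) (c : Clause Pred D) (ts : List (Skel Pred D)) :
    (Skel.node c ts).rename ρ = Skel.node (c.rename ρ) (ts.map (Skel.rename ρ)) := by
  rw [Skel.rename]; simp

theorem isInitial_rename {inits : Set Pred} {ρ : Pred → Pred} {c : Clause Pred D} :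
    IsInitial inits (c.rename ρ) ↔ IsInitial (ρ ⁻¹' inits) c := by
  simp [IsInitial, Clause.rename]

theorem HasInit.exists_clauseAt {inits : Set Pred} {s : Skel Pred D} (h : HasInit inits s) :
    ∃ π c, ClauseAt s π c ∧ IsInitial inits c := by
  induction h with
  | here hc => exact ⟨[], _, .here, hc⟩
  | there hmem _ ih =>
    obtain ⟨π, c, hat, hc⟩ := ih
    obtain ⟨i, hi, rfl⟩ := List.mem_iff_getElem.mp hmem
    exact ⟨i :: π, c, .child (List.getElem?_eq_getElem hi) hat, hc⟩

theorem ClauseAt.mem_of_wf {P : Program Pred D} {s : Skel Pred D} {π : List ℕ}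
    {c : Clause Pred D} (hat : ClauseAt s π c) (hwf : Wf P s) : c ∈ P := by
  induction hat with
  | here => cases hwf; assumption
  | child hget _ ih =>
    cases hwf with
    | node _ _ hts => exact ih (hts _ (List.mem_of_getElem? hget))

theorem ClauseAt.exists_rename {ρ : Pred → Pred} :
    ∀ {π : List ℕ} {s : Skel Pred D} {c : Clause Pred D},
      ClauseAt (s.rename ρ) π c → ∃ c', ClauseAt s π c' ∧ c = c'.rename ρ
  | [], .node c₁ _, _, hat => by
    rw [Skel.rename_node] at hat
    cases hat
    exact ⟨c₁, .here, rfl⟩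
  | _ :: _, .node _ _, _, hat => by
    rw [Skel.rename_node] at hat
    cases hat with
    | child hget hat' =>
      obtain ⟨s, hs, rfl⟩ := Option.map_eq_some_iff.mp (List.getElem?_map ▸ hget)
      obtain ⟨c', hc', rfl⟩ := hat'.exists_rename
      exact ⟨c', .child hs hc', rfl⟩

theorem ClauseAt.exists_valAt :
    ∀ {π : List ℕ} {dt : DTree Pred D} {c : Clause Pred D},
      ClauseAt dt.skel π c → ∃ v, ValAt dt π v
  | [], .node _ d _, _, _ => ⟨d, .here⟩
  | _ :: _, .node _ _ _, _, hat => by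
    rw [DTree.skel_node] at hat
    cases hat with
    | child hget hat' =>
      obtain ⟨dt, hdt, rfl⟩ := Option.map_eq_some_iff.mp (List.getElem?_map ▸ hget)
      obtain ⟨v, hv⟩ := hat'.exists_valAt
      exact ⟨v, .child hdt hv⟩

theorem DFeas.exists_constr_of_valAt {P : Program Pred D} {dt : DTree Pred D} {π : List ℕ}
    {v : D} {c : Clause Pred D} (hfeas : DFeas dt) (hwf : Wf P dt.skel) (hv : ValAt dt π v)
    (hat : ClauseAt dt.skel π c) :
    ∃ args : List D, args.length = c.body.length ∧ c.constr v args := by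
  induction hv generalizing c with
  | @here c' d ts =>
    rw [DTree.skel_node] at hat hwf
    cases hat
    cases hfeas with
    | node hcon _ =>
      cases hwf with
      | node _ hbody _ => exact ⟨_, by simp [hbody], hcon⟩
  | @child c' d ts i t π v hget _ ih =>
    rw [DTree.skel_node] at hat hwf
    cases hat with
    | child hget' hat' =>
      rw [List.getElem?_map, hget, Option.map_some, Option.some_inj] at hget'
      subst hget'
      have hmem := List.mem_of_getElem? hget
      cases hfeas with
      | node _ hfeas_ts =>
        cases hwf with
        | node _ _ hwf_ts =>
          exact ih (hfeas_ts t hmem) (hwf_ts _ (List.mem_map_of_mem hmem)) hat'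

theorem DFeas.constr_nil_of_valAt {P : Program Pred D} {dt : DTree Pred D} {π : List ℕ}
    {v : D} {c : Clause Pred D} (hfeas : DFeas dt) (hwf : Wf P dt.skel) (hv : ValAt dt π v)
    (hat : ClauseAt dt.skel π c) (hbody : c.body = []) : c.constr v [] := by
  obtain ⟨args, hlen, hcon⟩ := hfeas.exists_constr_of_valAt hwf hv hat
  rw [hbody, List.length_nil, List.length_eq_zero_iff] at hlen
  rwa [hlen] at hcon

theorem exists_of_mem_conjoinInit {P : Program Pred D} {inits : Set Pred} {φ : D → Prop}
    {c' : Clause Pred D} (h : c' ∈ conjoinInit P inits φ) :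
    ∃ c ∈ P, c'.head = c.head ∧ c'.body = c.body ∧
      ∀ d args, c'.constr d args → c.constr d args ∧ (IsInitial inits c → φ d) := by
  obtain ⟨c, hc, ⟨hni, rfl⟩ | ⟨_, rfl⟩⟩ := h
  · exact ⟨c', hc, rfl, rfl, fun _ _ h => ⟨h, fun hi => absurd hi hni⟩⟩
  · exact ⟨c, hc, rfl, rfl, fun _ _ h => ⟨h.1, fun _ => h.2⟩⟩

def DTree.InitsSatisfy (inits : Set Pred) (φ : D → Prop) (dt : DTree Pred D) : Prop :=
  ∀ π c v, ClauseAt dt.skel π c → ValAt dt π v → IsInitial inits c → φ v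

theorem DTree.InitsSatisfy.node {inits : Set Pred} {φ : D → Prop} {c : Clause Pred D} {d : D}
    {ts : List (DTree Pred D)} (hroot : IsInitial inits c → φ d)
    (hts : ∀ t ∈ ts, t.InitsSatisfy inits φ) : (DTree.node c d ts).InitsSatisfy inits φ := by
  intro π c' v hat hv hc'
  rw [DTree.skel_node] at hat
  cases hv with
  | here => cases hat; exact hroot hc'
  | child hget hv' =>
    cases hat with
    | child hget' hat' =>
      rw [List.getElem?_map, hget, Option.map_some, Option.some_inj] at hget'
      subst hget'
      exact hts _ (List.mem_of_getElem? hget) _ c' v hat' hv' hc'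

theorem Deco.exists_dtree_of_wf_conjoinInit {P : Program Pred D} {inits : Set Pred}
    {φ : D → Prop} {s : Skel Pred D} {d : D} (hdeco : Deco s d)
    (hwf : Wf (conjoinInit P inits φ) s) :
    ∃ dt : DTree Pred D, dt.val = d ∧ dt.skel.root = s.root ∧ DFeas dt ∧ Wf P dt.skel ∧
      dt.InitsSatisfy inits φ := by
  induction hdeco with
  | @node c' ts d args hcon hlen _ ih =>
    obtain ⟨hmem, hbody, hwf_ts⟩ : c' ∈ conjoinInit P inits φ ∧ c'.body = ts.map Skel.root ∧
        ∀ t ∈ ts, Wf (conjoinInit P inits φ) t := by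
      cases hwf with
      | node hmem hbody hwf_ts => exact ⟨hmem, hbody, hwf_ts⟩
    obtain ⟨c, hcP, hhead, hbody', hconstr⟩ := exists_of_mem_conjoinInit hmem
    obtain ⟨dts, hdts⟩ := List.exists_forall₂_of_forall_exists _
      fun p hp => ih p hp (hwf_ts p.1 (List.of_mem_zip hp).1)
    have hvals : dts.map DTree.val = args := by
      rw [← (hdts.imp fun _ _ h => h.1.symm).map_eq_map, List.map_snd_zip (by omega)]
    have hroots : (dts.map DTree.skel).map Skel.root = ts.map Skel.root := by
      have h : (ts.zip args).map (Skel.root ∘ Prod.fst) = dts.map (Skel.root ∘ DTree.skel) :=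
        (hdts.imp fun _ _ h => h.2.1.symm).map_eq_map
      rw [List.map_map, ← h, ← List.map_map, List.map_fst_zip (by omega)]
    have hgood : ∀ dt ∈ dts, DFeas dt ∧ Wf P dt.skel ∧ dt.InitsSatisfy inits φ := by
      intro dt hdt
      obtain ⟨_, _, _, _, h⟩ := hdts.exists_mem_left hdt
      exact h
    refine ⟨.node c d dts, rfl, by simp [Skel.root, hhead], ?_, ?_, ?_⟩
    · exact .node (hvals ▸ (hconstr d args hcon).1) fun dt hdt => (hgood dt hdt).1
    · rw [DTree.skel_node]
      refine .node hcP (by rw [← hbody', hbody, hroots]) ?_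
      simp only [List.mem_map]
      rintro _ ⟨dt, hdt, rfl⟩
      exact (hgood dt hdt).2.1
    · exact .node (hconstr d args hcon).2 fun dt hdt => (hgood dt hdt).2.2

theorem not_presafe_of_rename {P P' : Program Pred D} {inits : Set Pred} {ρ : Pred → Pred}
    {s' : Skel Pred D} {dt : DTree Pred D} {π : List ℕ} {c : Clause Pred D} {v : D}
    (hwf' : Wf P' s') (hren : s'.rename ρ = dt.skel) (hfeas : DFeas dt) (hwf : Wf P dt.skel)
    (hat : ClauseAt dt.skel π c) (hc : IsInitial inits c) (hv : ValAt dt π v) :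
    ¬ presafe P' (ρ ⁻¹' inits) v := by
  obtain ⟨c', hat', rfl⟩ := (hren ▸ hat : ClauseAt (s'.rename ρ) π c).exists_rename
  have hcon : (c'.rename ρ).constr v [] := hfeas.constr_nil_of_valAt hwf hv hat hc.2
  exact fun hsafe => hsafe ⟨c', hat'.mem_of_wf hwf', isInitial_rename.mp hc, hcon⟩

end CHC

open CHC in
theorem trace_elim_feasible_safe_precond_general {Pred D : Type} (P P' : Program Pred D)
    (inits : Set Pred) (ff : Pred) (t : Skel Pred D) (π : List ℕ)
    (c₀ : Clause Pred D) (ρ : Pred → Pred) (θ : D → Prop)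
    -- every AND-tree for `false` in `P` contains an initial node
    (hinit : ∀ s : Skel Pred D, Wf P s → s.root = ff → HasInit inits s)
    -- `π` is the position of an initial node of `t`, labelled by clause `c₀`
    (hat : ClauseAt t π c₀) (hc₀ : IsInitial inits c₀)
    -- `θ = constr(t)` projected onto the initial node's variables
    (hθ : ∀ d : D, θ d ↔ ∃ dt : DTree Pred D, dt.skel = t ∧ DFeas dt ∧ ValAt dt π d)
    -- AND-trees of `P'` are exactly those of `P` except `t` (modulo renaming)
    (hpres : ∀ s : Skel Pred D, Wf P s → s ≠ t →
      ∃ s' : Skel Pred D, Wf P' s' ∧ Skel.rename ρ s' = s) :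
    SafePrecond P inits ff (fun d => presafe P' (ρ ⁻¹' inits) d ∧ ¬ θ d) := by
  rintro ⟨s, d, hwf_s, hroot_s, hdeco⟩
  obtain ⟨dt, -, hdroot, hfeas, hwf, hsat⟩ := hdeco.exists_dtree_of_wf_conjoinInit hwf_s
  by_cases heq : dt.skel = t
  · subst heq
    obtain ⟨v, hv⟩ := hat.exists_valAt
    exact (hsat π c₀ v hat hv hc₀).2 ((hθ v).mpr ⟨dt, rfl, hfeas, hv⟩)
  · obtain ⟨s', hwf', hren⟩ := hpres dt.skel hwf heq
    obtain ⟨π₁, c₁, hat₁, hc₁⟩ := (hinit dt.skel hwf (hdroot.trans hroot_s)).exists_clauseAt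
    obtain ⟨v₁, hv₁⟩ := hat₁.exists_valAt
    exact not_presafe_of_rename hwf' hren hfeas hwf hat₁ hc₁ hv₁ (hsat π₁ c₁ v₁ hat₁ hv₁ hc₁).1

open CHC in
/-- Lemma 4: let `P'` be the result of eliminating a *feasible*
AND-tree `t` for `false` from `P`, let `p^I(x)` label an initial node of `t`
(at position `π`), and let `θ` be `constr(t)` projected onto that node's
variables (the set of values the initial node can take in satisfying
assignments of `t`).  Then conjoining `¬θ` with `presafe(P')` yields a safe
precondition for `P`. -/
theorem trace_elim_feasible_safe_precond {Pred D : Type} (P P' : Program Pred D)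
    (inits : Set Pred) (ff : Pred) (t : Skel Pred D) (π : List ℕ)
    (c₀ : Clause Pred D) (ρ : Pred → Pred) (θ : D → Prop)
    -- every AND-tree for `false` in `P` contains an initial node
    (hinit : ∀ s : Skel Pred D, Wf P s → s.root = ff → HasInit inits s)
    -- `t` is a feasible AND-tree for `false` in `P`
    (hwf : Wf P t) (hroot : t.root = ff) (hfeas : Feasible t)
    -- `π` is the position of an initial node of `t`, labelled by clause `c₀`
    (hat : ClauseAt t π c₀) (hc₀ : IsInitial inits c₀)
    -- `θ = constr(t)` projected onto the initial node's variables
    (hθ : ∀ d : D, θ d ↔ ∃ dt : DTree Pred D, dt.skel = t ∧ DFeas dt ∧ ValAt dt π d)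
    -- the renaming identifies `false` and the initial predicates
    (hff : ∀ p : Pred, ρ p = ff ↔ p = ff)
    -- all clauses of `P'` are predicate-renamed copies of clauses of `P`
    (hcopy : ∀ c' ∈ P', Clause.rename ρ c' ∈ P)
    -- AND-trees of `P'` are exactly those of `P` except `t` (modulo renaming)
    (hpres : ∀ s : Skel Pred D, Wf P s → s ≠ t →
      ∃ s' : Skel Pred D, Wf P' s' ∧ Skel.rename ρ s' = s)
    (hback : ∀ s' : Skel Pred D, Wf P' s' →
      Skel.rename ρ s' ≠ t ∧ Wf P (Skel.rename ρ s')) :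
    SafePrecond P inits ff (fun d => presafe P' (ρ ⁻¹' inits) d ∧ ¬ θ d) :=
  trace_elim_feasible_safe_precond_general P P' inits ff t π c₀ ρ θ hinit hat hc₀ hθ hpres
end

section
/- For the C program fragment modelled by the CHCs: init(A,B) ← true; if(A,B) ← A0 ≤ 100 ∧ A = 100 − A0 ∧ init(A0,B); if(A,B) ← A0 ≥ 101 ∧ A = A0 − 100 ∧ init(A0,B); while(A,B) ← if(A,B); while(A,B) ← A0 ≥ 1 ∧ A = A0 − 1 ∧ B = B0 − 2 ∧ while(A0,B0); false ← A ≤ 0 ∧ B = 0 ∧ while(A,B): the constraint B ≠ |2A − 200| on the initial state (a,b) = (A,B), over the integers, is a safe precondition, i.e., conjoining it to the init clause makes false underivable. -/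
/- The running-example CHCs of Figure 1, over linear integer arithmetic, with
the candidate safe precondition `B ≠ |2A − 200|` conjoined to the `init`
clause.  The inductive predicates below define exactly the least model of the
strengthened clauses; `false` is derivable iff the body of clause `c6` is
satisfiable in the least model. -/

/-- Clause `c1` strengthened with the precondition: `init(A,B) ← B ≠ |2A−200|`. -/
def InitP (A B : ℤ) : Prop := B ≠ |2 * A - 200|

/-- Clauses `c2`, `c3`. -/
inductive IfP : ℤ → ℤ → Prop where
  | c2 {A A₀ B : ℤ} : A₀ ≤ 100 → A = 100 - A₀ → InitP A₀ B → IfP A B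
  | c3 {A A₀ B : ℤ} : A₀ ≥ 101 → A = A₀ - 100 → InitP A₀ B → IfP A B

/-- Clauses `c4`, `c5`. -/
inductive WhileP : ℤ → ℤ → Prop where
  | c4 {A B : ℤ} : IfP A B → WhileP A B
  | c5 {A A₀ B B₀ : ℤ} : A₀ ≥ 1 → A = A₀ - 1 → B = B₀ - 2 → WhileP A₀ B₀ →
      WhileP A B

lemma while_inv {A B : ℤ} (h : WhileP A B) : A ≥ 0 ∧ B ≠ 2 * A := by
  induction h with
  | c4 hif =>
    cases hif with
    | c2 h1 h2 h3 =>
      subst h2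
      refine ⟨by omega, fun hc => h3 ?_⟩
      rw [abs_of_nonpos (by omega)]; omega
    | c3 h1 h2 h3 =>
      subst h2
      refine ⟨by omega, fun hc => h3 ?_⟩
      rw [abs_of_nonneg (by omega)]; omega
  | c5 h1 h2 h3 _ ih => omega

/-- the constraint `B ≠ |2A − 200|` on the initial state is a
safe precondition for the program of Figure 1: conjoining it to the `init`
clause makes `false` (clause `c6`: `false ← A ≤ 0 ∧ B = 0 ∧ while(A,B)`)
underivable. -/
theorem running_example_safe_precondition :
    ¬ ∃ A B : ℤ, A ≤ 0 ∧ B = 0 ∧ WhileP A B := by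
  rintro ⟨A, B, hA, hB, hW⟩
  have := while_inv hW
  omega
end
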